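/- The limit of Ω(ε)/ε as ε → ∞ exists and equals √(2π)·Γ(3/4)/Γ(1/4), where Γ is the Euler Gamma function. -/

import Mathlib

open Real Set

/-- The modulus κ(ε) = ε/√(2(1+ε²)). -/
noncomputable def kappaMod (ε : ℝ) : ℝ := ε / Real.sqrt (2 * (1 + ε ^ 2))

/-- The complete elliptic integral of the first kind
K(κ) = ∫₀^{π/2} dθ/√(1 - κ² sin²θ). -/
noncomputable def ellipticK (κ : ℝ) : ℝ :=
  ∫ θ in (0:ℝ)..(π / 2), 1 / Real.sqrt (1 - κ ^ 2 * Real.sin θ ^ 2)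

/-- The frequency Ω(ε) = (π/2)·√(1+ε²)/K(κ(ε)) of the single-mode solution. -/
noncomputable def freqOmega (ε : ℝ) : ℝ :=
  (π / 2) * Real.sqrt (1 + ε ^ 2) / ellipticK (kappaMod ε)

/-!
As `ε → ∞`, `√(1 + ε²)/ε → 1` and hence `κ(ε) → 1/√2`, so by continuity of `K` on `κ² < 1` the
ratio `Ω(ε)/ε` tends to `(π/2)/K(1/√2)`. Since `1 - sin²θ/2 = (1 + cos²θ)/2`, the substitution
`t = cos⁴θ` turns `K(1/√2) = √2 ∫₀^{π/2} dθ/√(1 + cos²θ)` into the Beta integral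
`(√2/4)·B(1/4, 1/2) = √(2π) Γ(1/4) / (4 Γ(3/4))`.
-/

open MeasureTheory Filter Topology

theorem integral_rpow_mul_one_sub_rpow {a b : ℝ} (ha : 0 < a) (hb : 0 < b) :
    ∫ t in (0:ℝ)..1, t ^ (a - 1) * (1 - t) ^ (b - 1) = Gamma a * Gamma b / Gamma (a + b) := by
  have hofReal : ∀ t ∈ uIcc (0:ℝ) 1, ((t ^ (a - 1) * (1 - t) ^ (b - 1) : ℝ) : ℂ) =
      (t : ℂ) ^ ((a : ℂ) - 1) * (1 - (t : ℂ)) ^ ((b : ℂ) - 1) := by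
    intro t ht
    rw [uIcc_of_le zero_le_one] at ht
    push_cast
    rw [Complex.ofReal_cpow ht.1, Complex.ofReal_cpow (sub_nonneg.2 ht.2)]
    push_cast
    rfl
  have hbeta := Complex.betaIntegral_eq_Gamma_mul_div a b (by simpa) (by simpa)
  rw [Complex.betaIntegral, ← intervalIntegral.integral_congr hofReal,
    intervalIntegral.integral_ofReal, ← Complex.ofReal_add, Complex.Gamma_ofReal,
    Complex.Gamma_ofReal, Complex.Gamma_ofReal] at hbeta
  exact_mod_cast hbeta

theorem StrictAntiOn.image_Ioo_eq {f : ℝ → ℝ} {a b : ℝ} (hab : a ≤ b)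
    (hf : StrictAntiOn f (Icc a b)) (hcont : ContinuousOn f (Icc a b)) :
    f '' Ioo a b = Ioo (f b) (f a) :=
  hf.image_Ioo_subset.antisymm (intermediate_value_Ioo' hab hcont)

theorem strictAntiOn_cos_pow_four : StrictAntiOn (fun θ => cos θ ^ 4) (Icc 0 (π / 2)) := by
  intro x hx y hy hxy
  have hcos : cos y < cos x :=
    strictAntiOn_cos (Icc_subset_Icc_right (by linarith [pi_pos]) hx)
      (Icc_subset_Icc_right (by linarith [pi_pos]) hy) hxy
  have hy₀ : 0 ≤ cos y := cos_nonneg_of_mem_Icc ⟨by linarith [pi_pos, hy.1], hy.2⟩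
  exact pow_lt_pow_left₀ hcos hy₀ (by norm_num)

theorem inv_sqrt_one_add_sq_eq_mul_rpow {c s : ℝ} (hc : 0 < c) (hs : 0 < s)
    (hcs : s ^ 2 + c ^ 2 = 1) :
    (√(1 + c ^ 2))⁻¹ = c ^ 3 * s * ((c ^ 4) ^ (-(3/4) : ℝ) * (1 - c ^ 4) ^ (-(1/2) : ℝ)) := by
  have hc4 : (c ^ 4) ^ (-(3/4) : ℝ) = (c ^ 3)⁻¹ := by
    rw [← rpow_natCast c 4, ← rpow_mul hc.le, show ((4:ℕ):ℝ) * (-(3/4)) = ((-3:ℤ):ℝ) by norm_num,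
      rpow_intCast, zpow_neg, zpow_ofNat]
  have hs4 : (1 - c ^ 4) ^ (-(1/2) : ℝ) = (s * √(1 + c ^ 2))⁻¹ := by
    rw [show 1 - c ^ 4 = s ^ 2 * (1 + c ^ 2) by linear_combination (-(1 + c ^ 2)) * hcs,
      rpow_neg (by positivity), ← sqrt_eq_rpow, sqrt_mul (by positivity), sqrt_sq hs.le]
  have : 0 < √(1 + c ^ 2) := by positivity
  rw [hc4, hs4]
  field_simp

theorem integral_inv_sqrt_one_add_cos_sq :
    ∫ θ in (0:ℝ)..π / 2, (√(1 + cos θ ^ 2))⁻¹ =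
      (∫ t in (0:ℝ)..1, t ^ (-(3/4) : ℝ) * (1 - t) ^ (-(1/2) : ℝ)) / 4 := by
  have hpi : (0:ℝ) ≤ π / 2 := by positivity
  have himage : (fun θ => cos θ ^ 4) '' Ioo 0 (π / 2) = Ioo 0 1 := by
    rw [strictAntiOn_cos_pow_four.image_Ioo_eq hpi (by fun_prop)]
    simp
  rw [intervalIntegral.integral_of_le hpi, intervalIntegral.integral_of_le zero_le_one,
    integral_Ioc_eq_integral_Ioo, integral_Ioc_eq_integral_Ioo, ← himage,
    integral_image_eq_integral_abs_deriv_smul (f := fun θ => cos θ ^ 4) measurableSet_Ioo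
      (fun θ _ => ((hasDerivAt_cos θ).pow 4).hasDerivWithinAt)
      (strictAntiOn_cos_pow_four.injOn.mono Ioo_subset_Icc_self), ← integral_div]
  refine setIntegral_congr_fun measurableSet_Ioo fun θ hθ => ?_
  have hc : 0 < cos θ := cos_pos_of_mem_Ioo ⟨by linarith [hθ.1], hθ.2⟩
  have hs : 0 < sin θ := sin_pos_of_pos_of_lt_pi hθ.1 (by linarith [hθ.2, pi_pos])
  rw [inv_sqrt_one_add_sq_eq_mul_rpow hc hs (sin_sq_add_cos_sq θ), smul_eq_mul, Nat.cast_ofNat,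
    abs_of_neg (mul_neg_of_pos_of_neg (mul_pos four_pos (pow_pos hc _)) (neg_neg_of_pos hs))]
  ring

theorem continuousAt_ellipticK {κ₀ : ℝ} (hκ₀ : κ₀ ^ 2 < 1) : ContinuousAt ellipticK κ₀ := by
  obtain ⟨δ, hδ, hκ₀δ⟩ : ∃ δ : ℝ, 0 < δ ∧ κ₀ ^ 2 < 1 - δ :=
    ⟨(1 - κ₀ ^ 2) / 2, by linarith, by linarith⟩
  -- Away from `κ² = 1` the radicand stays above `δ`, so clipping it at `δ` changes nothing.
  have hclip : Continuous fun κ : ℝ =>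
      ∫ θ in (0:ℝ)..π / 2, 1 / √(max (1 - κ ^ 2 * sin θ ^ 2) δ) := by
    refine intervalIntegral.continuous_parametric_intervalIntegral_of_continuous' ?_ _ _
    exact continuous_const.div (by fun_prop)
      fun p => (sqrt_pos.2 (lt_max_of_lt_right hδ)).ne'
  refine hclip.continuousAt.congr (eventuallyEq_of_mem
    ((isOpen_lt (continuous_pow 2) continuous_const).mem_nhds hκ₀δ) ?_)
  intro κ (hκ : κ ^ 2 < 1 - δ)
  refine intervalIntegral.integral_congr fun θ _ => ?_
  have : κ ^ 2 * sin θ ^ 2 ≤ κ ^ 2 := mul_le_of_le_one_right (sq_nonneg κ) (sin_sq_le_one θ)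
  simp only [max_eq_left (by linarith : δ ≤ 1 - κ ^ 2 * sin θ ^ 2)]

theorem ellipticK_inv_sqrt_two :
    ellipticK (√2)⁻¹ = √(2 * π) * Gamma (1/4) / (4 * Gamma (3/4)) := by
  have hintegrand : ∀ θ : ℝ, 1 / √(1 - (√2)⁻¹ ^ 2 * sin θ ^ 2) = √2 * (√(1 + cos θ ^ 2))⁻¹ := by
    intro θ
    rw [inv_pow, sq_sqrt zero_le_two, show 1 - 2⁻¹ * sin θ ^ 2 = (1 + cos θ ^ 2) / 2 by
      rw [sin_sq]; ring, sqrt_div' _ zero_le_two, one_div, inv_div, div_eq_mul_inv]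
  have hbeta := integral_rpow_mul_one_sub_rpow (a := 1/4) (b := 1/2) (by norm_num) (by norm_num)
  norm_num at hbeta
  rw [ellipticK, intervalIntegral.integral_congr fun θ _ => hintegrand θ,
    intervalIntegral.integral_const_mul, integral_inv_sqrt_one_add_cos_sq, hbeta,
    Gamma_one_half_eq, sqrt_mul zero_le_two]
  ring

theorem tendsto_sqrt_one_add_sq_div_self :
    Tendsto (fun ε : ℝ => √(1 + ε ^ 2) / ε) atTop (𝓝 1) := by
  have hlim : Tendsto (fun ε : ℝ => √((ε ^ 2)⁻¹ + 1)) atTop (𝓝 1) := by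
    simpa using ((tendsto_pow_atTop two_ne_zero).inv_tendsto_atTop.add_const 1).sqrt
  refine hlim.congr' ?_
  filter_upwards [eventually_gt_atTop 0] with ε hε
  rw [show (ε ^ 2)⁻¹ + 1 = (1 + ε ^ 2) / ε ^ 2 by field_simp,
    sqrt_div' _ (sq_nonneg ε), sqrt_sq hε.le]

theorem kappaMod_eq_inv {ε : ℝ} (hε : 0 < ε) : kappaMod ε = (√2 * (√(1 + ε ^ 2) / ε))⁻¹ := by
  rw [kappaMod, sqrt_mul zero_le_two]
  field_simp

theorem tendsto_kappaMod : Tendsto kappaMod atTop (𝓝 (√2)⁻¹) := by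
  have h := (tendsto_sqrt_one_add_sq_div_self.const_mul √2).inv₀ (by positivity)
  rw [mul_one] at h
  exact h.congr' (eventually_gt_atTop 0 |>.mono fun ε hε => (kappaMod_eq_inv hε).symm)

/-- Ω(ε)/ε → √(2π)·Γ(3/4)/Γ(1/4) as ε → ∞. -/
theorem freqOmega_large_amplitude :
    Filter.Tendsto (fun ε : ℝ => freqOmega ε / ε) Filter.atTop
      (nhds (Real.sqrt (2 * π) * Real.Gamma (3 / 4) / Real.Gamma (1 / 4))) := by
  have hK : Tendsto (fun ε => ellipticK (kappaMod ε)) atTop (𝓝 (ellipticK (√2)⁻¹)) :=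
    (continuousAt_ellipticK (by norm_num)).tendsto.comp tendsto_kappaMod
  have hG₁ : 0 < Gamma (1/4) := Gamma_pos_of_pos (by norm_num)
  have hG₃ : 0 < Gamma (3/4) := Gamma_pos_of_pos (by norm_num)
  have hK₀ : ellipticK (√2)⁻¹ ≠ 0 := by rw [ellipticK_inv_sqrt_two]; positivity
  have hlim := (tendsto_sqrt_one_add_sq_div_self.const_mul (π / 2)).div hK hK₀
  convert hlim using 2 with ε
  · simp only [freqOmega, Pi.div_apply]
    ring
  · have h2π : √(2 * π) ^ 2 = 2 * π := sq_sqrt (by positivity)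
    rw [ellipticK_inv_sqrt_two]
    field_simp
    linear_combination 2 * h2π
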